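/- Let x ∈ ℝ satisfy inf_{q ∈ ℕ, q ≥ 1} q ‖qx‖ = 0. Then for every y ∈ ℝ, inf_{q ∈ ℕ, q ≥ 1} max(q ‖qx‖, ‖qy‖) = 0. -/

import Mathlib

/-- Distance from a real number to the nearest integer. -/
noncomputable def dInt (x : ℝ) : ℝ := ⨅ n : ℤ, |x - n|

/-! Given `ε`, Dirichlet's theorem applied to `qy` yields `k ≤ K ≈ 1/ε` with `‖kqy‖ ≤ 1/(K+1)`,
while `‖kqx‖ ≤ k‖qx‖` gives `kq‖kqx‖ ≤ K² · q‖qx‖`. Choosing first `q` with `q‖qx‖ < ε/K²`,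
the multiple `kq` makes both terms of the maximum smaller than `ε`. -/

lemma dInt_eq_abs_sub_round (x : ℝ) : dInt x = |x - round x| :=
  le_antisymm (ciInf_le ⟨0, by rintro _ ⟨n, rfl⟩; positivity⟩ (round x)) (le_ciInf (round_le x))

lemma dInt_nonneg (x : ℝ) : 0 ≤ dInt x := by
  rw [dInt_eq_abs_sub_round]
  positivity

lemma dInt_eq_norm_unitAddCircle (x : ℝ) : dInt x = ‖(x : UnitAddCircle)‖ := by
  rw [UnitAddCircle.norm_eq, dInt_eq_abs_sub_round]

lemma dInt_natCast_mul_le (k : ℕ) (x : ℝ) : dInt (k * x) ≤ k * dInt x := by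
  simpa [dInt_eq_norm_unitAddCircle, ← nsmul_eq_mul] using (norm_nsmul_le : ‖k • (x : UnitAddCircle)‖ ≤ _)

lemma natCast_mul_mul_dInt_le (k q : ℕ) (x : ℝ) :
    ((k * q : ℕ) : ℝ) * dInt ((k * q : ℕ) * x) ≤ (k : ℝ) ^ 2 * (q * dInt (q * x)) := by
  calc ((k * q : ℕ) : ℝ) * dInt ((k * q : ℕ) * x) = (k * q) * dInt (k * (q * x)) := by
        push_cast; ring_nf
    _ ≤ (k * q) * (k * dInt (q * x)) := by gcongr; exact dInt_natCast_mul_le k (q * x)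
    _ = (k : ℝ) ^ 2 * (q * dInt (q * x)) := by ring

lemma exists_dInt_natCast_mul_le (ξ : ℝ) {n : ℕ} (hn : 0 < n) :
    ∃ k : ℕ, 0 < k ∧ k ≤ n ∧ dInt (k * ξ) ≤ 1 / (n + 1) := by
  simpa only [dInt_eq_abs_sub_round] using Real.exists_nat_abs_mul_sub_round_le ξ hn

/-- If `inf_{q ≥ 1} q ‖qx‖ = 0`, then for every `y`,
`inf_{q ≥ 1} max(q ‖qx‖, ‖qy‖) = 0`. -/
theorem inf_max_eq_zero (x : ℝ)
    (hx : ⨅ q : {q : ℕ // 0 < q}, (q : ℝ) * dInt ((q : ℝ) * x) = 0) :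
    ∀ y : ℝ,
      ⨅ q : {q : ℕ // 0 < q},
        max ((q : ℝ) * dInt ((q : ℝ) * x)) (dInt ((q : ℝ) * y)) = 0 := by
  intro y
  have : Nonempty {q : ℕ // 0 < q} := ⟨⟨1, one_pos⟩⟩
  refine ciInf_eq_of_forall_ge_of_forall_gt_exists_lt
    (fun q => (dInt_nonneg _).trans (le_max_right _ _)) fun ε hε => ?_
  obtain ⟨n, hn⟩ := exists_nat_one_div_lt hε
  set K := n + 1
  have hK : (0 : ℝ) < K := by positivity
  obtain ⟨q, hq⟩ : ∃ q : {q : ℕ // 0 < q}, (q : ℝ) * dInt (q * x) < ε / K ^ 2 :=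
    exists_lt_of_ciInf_lt (hx ▸ by positivity)
  obtain ⟨k, hk0, hkK, hky⟩ := exists_dInt_natCast_mul_le (q * y) n.succ_pos
  refine ⟨⟨k * q, Nat.mul_pos hk0 q.2⟩, max_lt ?_ ?_⟩
  · calc ((k * q : ℕ) : ℝ) * dInt ((k * q : ℕ) * x) ≤ (k : ℝ) ^ 2 * (q * dInt (q * x)) :=
          natCast_mul_mul_dInt_le k q x
      _ ≤ (K : ℝ) ^ 2 * (q * dInt (q * x)) := by
          gcongr
          exact mul_nonneg q.1.cast_nonneg (dInt_nonneg _)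
      _ < K ^ 2 * (ε / K ^ 2) := by gcongr
      _ = ε := by field_simp
  · have hK1 : 1 / ((K : ℝ) + 1) ≤ 1 / (n + 1) := by gcongr; simp [K]
    calc dInt (((k * q : ℕ) : ℝ) * y) = dInt (k * (q * y)) := by push_cast; ring_nf
      _ < ε := by linarith
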